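/- If row₁ ∼ row₁′ and row₂ ∼ row₂′, the last atom of row₁ equals the first atom of row₂, and the last atom of row₁′ equals the first atom of row₂′, then row₁ ⋆ row₂ ∼ row₁′ ⋆ row₂′, where w ⋆ w′ denotes concatenation of w with w′ with the first letter of w′ deleted. -/
import Mathlib

structure Atom (α β : Type) where
  req : Finset α
  prop : Finset β
deriving DecidableEq

def rank {α β : Type} (REQ : Finset α) (A : Atom α β) : ℕ :=
  REQ.card - A.req.card

/-- Run-length encoding (maximal factorization) of a word of atoms. -/
def rle {α β : Type} [DecidableEq α] [DecidableEq β] :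
    List (Atom α β) → List (Atom α β × ℕ)
  | [] => []
  | a :: l =>
    match rle l with
    | [] => [(a, 1)]
    | (b, m) :: t => if a = b then (b, m + 1) :: t else (a, 1) :: (b, m) :: t

def BlockEquiv {α β : Type} (REQ : Finset α) (b b' : Atom α β × ℕ) : Prop :=
  b.1 = b'.1 ∧ (b.2 = b'.2 ∨ (rank REQ b.1 < b.2 ∧ rank REQ b.1 < b'.2))

/-- Equivalence ∼ of rows: blockwise equivalence of their maximal factorizations. -/
def REquiv {α β : Type} [DecidableEq α] [DecidableEq β]
    (REQ : Finset α) (w w' : List (Atom α β)) : Prop :=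
  List.Forall₂ (BlockEquiv REQ) (rle w) (rle w')

section Aux
variable {α β : Type} [DecidableEq α] [DecidableEq β]

def cons1 (a : Atom α β) (q : List (Atom α β × ℕ)) : List (Atom α β × ℕ) :=
  match q with
  | [] => [(a, 1)]
  | (b, n) :: t => if a = b then (b, n + 1) :: t else (a, 1) :: (b, n) :: t

lemma rle_cons (a : Atom α β) (l : List (Atom α β)) : rle (a :: l) = cons1 a (rle l) := by
  cases h : rle l with
  | nil => simp [rle, cons1, h]
  | cons hd t => obtain ⟨b, n⟩ := hd; simp [rle, cons1, h]

lemma cons1_ne_nil (a : Atom α β) (q : List (Atom α β × ℕ)) : cons1 a q ≠ [] := by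
  cases q with
  | nil => simp [cons1]
  | cons hd t => obtain ⟨b, n⟩ := hd; by_cases h : a = b <;> simp [cons1, h]

lemma rle_ne_nil {w : List (Atom α β)} (hw : w ≠ []) : rle w ≠ [] := by
  cases w with
  | nil => simp at hw
  | cons a l => rw [rle_cons]; exact cons1_ne_nil a (rle l)

def glue : List (Atom α β × ℕ) → List (Atom α β × ℕ) → List (Atom α β × ℕ)
  | [], q => q
  | [(a, m)], q =>
    match q with
    | [] => [(a, m)]
    | (b, n) :: t => if a = b then (b, m + n) :: t else (a, m) :: (b, n) :: t
  | p₀ :: p₁ :: p, q => p₀ :: glue (p₁ :: p) q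

lemma glue_cons_head (p₀ : Atom α β × ℕ) (p q : List (Atom α β × ℕ)) :
    ∃ n t, glue (p₀ :: p) q = (p₀.1, n) :: t := by
  obtain ⟨a, m⟩ := p₀
  cases p with
  | nil =>
    cases q with
    | nil => exact ⟨m, [], rfl⟩
    | cons hd t =>
      obtain ⟨b, n⟩ := hd
      by_cases hab : a = b
      · subst hab; exact ⟨m + n, t, by simp [glue]⟩
      · exact ⟨m, (b, n) :: t, by simp [glue, hab]⟩
  | cons p₁ p => exact ⟨m, glue (p₁ :: p) q, rfl⟩

lemma glue_cons1 (a : Atom α β) (p q : List (Atom α β × ℕ)) (hp : p ≠ []) :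
    glue (cons1 a p) q = cons1 a (glue p q) := by
  obtain ⟨⟨b, m⟩, p', rfl⟩ : ∃ x p', p = x :: p' := by
    cases p with | nil => simp at hp | cons x p' => exact ⟨x, p', rfl⟩
  by_cases hab : a = b
  · subst hab
    cases p' with
    | nil =>
      cases q with
      | nil => simp [cons1, glue]
      | cons hd t =>
        obtain ⟨c, n⟩ := hd
        by_cases hbc : a = c
        · subst hbc
          simp [cons1, glue, Nat.add_right_comm]
        · simp [cons1, glue, hbc]
    | cons p₁ p'' => simp [cons1, glue]
  · obtain ⟨n, t, hg⟩ := glue_cons_head (b, m) p' q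
    have h1 : cons1 a ((b, m) :: p') = (a, 1) :: (b, m) :: p' := by simp [cons1, hab]
    have h2 : glue ((a, 1) :: (b, m) :: p') q = (a, 1) :: glue ((b, m) :: p') q := rfl
    rw [h1, h2, hg]
    simp [cons1, hab]

end Aux

section Aux2
variable {α β : Type} [DecidableEq α] [DecidableEq β]

lemma rle_append (w u : List (Atom α β)) (hw : w ≠ []) :
    rle (w ++ u) = glue (rle w) (rle u) := by
  induction w with
  | nil => simp at hw
  | cons a w ih =>
    cases w with
    | nil =>
      simp only [List.singleton_append, rle_cons]
      have h0 : cons1 a (rle ([] : List (Atom α β))) = [(a, 1)] := rfl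
      rw [h0]
      cases h : rle u with
      | nil => simp [cons1, glue]
      | cons hd t =>
        obtain ⟨b, n⟩ := hd
        by_cases hab : a = b <;> simp [cons1, glue, hab, Nat.add_comm]
    | cons a' w' =>
      have hne : (a' :: w' : List (Atom α β)) ≠ [] := by simp
      have e : (a :: a' :: w') ++ u = a :: ((a' :: w') ++ u) := rfl
      rw [e, rle_cons, ih hne, ← glue_cons1 a _ _ (rle_ne_nil hne), ← rle_cons]

lemma cons1_pos (a : Atom α β) (q : List (Atom α β × ℕ)) (hq : ∀ x ∈ q, 1 ≤ x.2) :
    ∀ x ∈ cons1 a q, 1 ≤ x.2 := by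
  cases q with
  | nil => simp [cons1]
  | cons hd t =>
    obtain ⟨b, n⟩ := hd
    by_cases hab : a = b
    · intro x hx
      simp only [cons1, if_pos hab] at hx
      rcases List.mem_cons.mp hx with h | h
      · subst h; simp
      · exact hq x (List.mem_cons_of_mem _ h)
    · intro x hx
      simp only [cons1, if_neg hab] at hx
      rcases List.mem_cons.mp hx with h | h
      · subst h; simp
      · exact hq x h

lemma rle_pos {w : List (Atom α β)} : ∀ x ∈ rle w, 1 ≤ x.2 := by
  induction w with
  | nil => simp [rle]
  | cons a l ih => rw [rle_cons]; exact cons1_pos a (rle l) ih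

lemma combine_counts (r m m' xx xx' : ℕ) (hm : 1 ≤ m) (hm' : 1 ≤ m')
    (hxx : 1 ≤ xx) (hxx' : 1 ≤ xx')
    (h1 : m = m' ∨ (r < m ∧ r < m')) (h2 : xx = xx' ∨ (r < xx ∧ r < xx')) :
    m + xx - 1 = m' + xx' - 1 ∨ (r < m + xx - 1 ∧ r < m' + xx' - 1) := by
  rcases h1 with rfl | h1
  · rcases h2 with rfl | h2
    · left; rfl
    · right; omega
  · right; rcases h2 with rfl | h2 <;> omega

lemma rle_getLast_atom {w : List (Atom α β)} (hw : w ≠ []) :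
    ((rle w).getLast?).map Prod.fst = w.getLast? := by
  induction w with
  | nil => simp at hw
  | cons a l ih =>
    cases l with
    | nil => rfl
    | cons a' l' =>
      have hne : (a' :: l' : List (Atom α β)) ≠ [] := by simp
      rw [rle_cons, List.getLast?_cons_cons]
      rw [← ih hne]
      cases h : rle (a' :: l') with
      | nil => exact absurd h (rle_ne_nil hne)
      | cons hd t =>
        obtain ⟨b, n⟩ := hd
        by_cases hab : a = b
        · simp only [cons1, if_pos hab]
          cases t <;> simp
        · simp only [cons1, if_neg hab]
          cases t <;> simp

lemma forall₂_map_fst {REQ : Finset α} {p p' : List (Atom α β × ℕ)}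
    (h : List.Forall₂ (BlockEquiv REQ) p p') : p.map Prod.fst = p'.map Prod.fst := by
  induction h with
  | nil => rfl
  | cons hxy _ ih => simp [hxy.1, ih]

lemma glue_single (c : Atom α β) (m : ℕ) (q : List (Atom α β × ℕ)) :
    ∃ x t, cons1 c q = (c, x) :: t ∧ 1 ≤ x ∧ glue [(c, m)] q = (c, m + x - 1) :: t := by
  cases q with
  | nil => exact ⟨1, [], rfl, le_refl 1, by simp [glue]⟩
  | cons hd t =>
    obtain ⟨b, n⟩ := hd
    by_cases hcb : c = b
    · subst hcb
      have e : m + (n + 1) - 1 = m + n := by omega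
      exact ⟨n + 1, t, by simp [cons1], by omega, by simp [glue, e]⟩
    · exact ⟨1, (b, n) :: t, by simp [cons1, hcb], le_refl 1, by simp [glue, hcb]⟩

lemma glue_equiv (REQ : Finset α) :
    ∀ (p p' q q' : List (Atom α β × ℕ)) (c : Atom α β),
    List.Forall₂ (BlockEquiv REQ) p p' →
    (p.getLast?).map Prod.fst = some c →
    (p'.getLast?).map Prod.fst = some c →
    (∀ x ∈ p, 1 ≤ x.2) → (∀ x ∈ p', 1 ≤ x.2) →
    List.Forall₂ (BlockEquiv REQ) (cons1 c q) (cons1 c q') →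
    List.Forall₂ (BlockEquiv REQ) (glue p q) (glue p' q') := by
  intro p p' q q' c hpp hlast hlast' hpos hpos' hqq
  induction hpp with
  | nil => simp at hlast
  | @cons x y p p' hxy hpp ih =>
    cases p with
    | nil =>
      cases hpp
      obtain ⟨a, m⟩ := x
      obtain ⟨a', m'⟩ := y
      have hac : a = c := by simpa using hlast
      have hac' : a' = c := by simpa using hlast'
      have hm : 1 ≤ m := hpos (a, m) (by simp)
      have hm' : 1 ≤ m' := hpos' (a', m') (by simp)
      rw [hac, hac'] at hxy ⊢
      obtain ⟨xx, t, hc1, hxx, hg1⟩ := glue_single c m q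
      obtain ⟨xx', t', hc1', hxx', hg1'⟩ := glue_single c m' q'
      rw [hg1, hg1']
      rw [hc1, hc1'] at hqq
      obtain ⟨hhead, htail⟩ := List.forall₂_cons.mp hqq
      refine List.Forall₂.cons ⟨rfl, ?_⟩ htail
      obtain ⟨-, h1⟩ := hxy
      obtain ⟨-, h2⟩ := hhead
      exact combine_counts (rank REQ c) m m' xx xx' hm hm' hxx hxx' h1 h2
    | cons p₁ ptl =>
      cases hpp with
      | cons hxy₁ hpp₁ =>
        rename_i y₁ ptl'
        have e1 : glue (x :: p₁ :: ptl) q = x :: glue (p₁ :: ptl) q := rfl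
        have e2 : glue (y :: y₁ :: ptl') q' = y :: glue (y₁ :: ptl') q' := rfl
        rw [e1, e2]
        refine List.Forall₂.cons hxy (ih ?_ ?_ ?_ ?_)
        · rw [← hlast]; simp [List.getLast?_cons_cons]
        · rw [← hlast']; simp [List.getLast?_cons_cons]
        · intro z hz; exact hpos z (List.mem_cons_of_mem _ hz)
        · intro z hz; exact hpos' z (List.mem_cons_of_mem _ hz)
end Aux2

lemma forall₂_getLast_fst {α β : Type} [DecidableEq α] [DecidableEq β]
    {REQ : Finset α} {p p' : List (Atom α β × ℕ)}
    (h : List.Forall₂ (BlockEquiv REQ) p p') :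
    (p.getLast?).map Prod.fst = (p'.getLast?).map Prod.fst := by
  have hmap := forall₂_map_fst h
  rw [← List.getLast?_map, ← List.getLast?_map, hmap]

/-- If row₁ ∼ row₁′, row₂ ∼ row₂′, and the fusions are defined (the last atom of the
first word equals the first atom of the second), then row₁ ⋆ row₂ ∼ row₁′ ⋆ row₂′,
where w ⋆ w′ = w ++ (tail of w′). -/
theorem fusion_preserves_equiv {α β : Type} [DecidableEq α] [DecidableEq β]
    (REQ : Finset α) (r₁ r₁' r₂ r₂' : List (Atom α β))
    (h₁ : REquiv REQ r₁ r₁') (h₂ : REquiv REQ r₂ r₂')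
    (hne₁ : r₁ ≠ []) (hne₂ : r₂ ≠ []) (hne₁' : r₁' ≠ []) (hne₂' : r₂' ≠ [])
    (hf : r₁.getLast? = r₂.head?) (hf' : r₁'.getLast? = r₂'.head?) :
    REquiv REQ (r₁ ++ r₂.tail) (r₁' ++ r₂'.tail) := by
  obtain ⟨c, u, rfl⟩ : ∃ c u, r₂ = c :: u := by
    cases r₂ with | nil => simp at hne₂ | cons c u => exact ⟨c, u, rfl⟩
  obtain ⟨c', u', rfl⟩ : ∃ c u, r₂' = c :: u := by
    cases r₂' with | nil => simp at hne₂' | cons c u => exact ⟨c, u, rfl⟩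
  have hlast : ((rle r₁).getLast?).map Prod.fst = some c := by
    rw [rle_getLast_atom hne₁, hf]; rfl
  have hlast' : ((rle r₁').getLast?).map Prod.fst = some c' := by
    rw [rle_getLast_atom hne₁', hf']; rfl
  have hcc : c = c' := by
    have h := forall₂_getLast_fst h₁
    rw [hlast, hlast'] at h
    exact Option.some.inj h
  subst hcc
  show List.Forall₂ (BlockEquiv REQ) (rle (r₁ ++ u)) (rle (r₁' ++ u'))
  rw [rle_append _ _ hne₁, rle_append _ _ hne₁']
  refine glue_equiv REQ _ _ _ _ c h₁ hlast hlast' rle_pos rle_pos ?_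
  have h₂' : List.Forall₂ (BlockEquiv REQ) (rle (c :: u)) (rle (c :: u')) := h₂
  rwa [rle_cons, rle_cons] at h₂'
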